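/- arXiv:1901.01137 — 2 statements merged into one kernel-verified Lean document; each statement's English description precedes it below -/
import Mathlib

section
/- For 0 < ϖ < 2, the binary MIM function L(ϖ,p) = p·exp(ϖ(1−p)) + (1−p)·exp(ϖp) is strictly concave on [0,1] (its second derivative exp(ϖ(1−p))·(ϖp−2)·ϖ + exp(ϖp)·((1−p)ϖ−2)·ϖ is negative on [0,1]), and it attains its maximum over [0,1] uniquely at p = 1/2, where its value is exp(ϖ/2). -/
/-!
Writing `g q = q · exp (ϖ (1 - q))`, the binary MIM function is `L p = g p + g (1 - p)`, so it
is symmetric under `p ↦ 1 - p` and `L'' p = g'' p + g'' (1 - p)` with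
`g'' q = ϖ · exp (ϖ (1 - q)) · (ϖ q - 2)`, which is negative as soon as `ϖ q < 2`. Hence `L` is
strictly concave on `[0, 1]` for `0 < ϖ < 2`, and strict concavity together with the symmetry
forces `L p = (L p + L (1 - p)) / 2 < L (1 / 2)` for `p ≠ 1 / 2`.
-/

open Real Set

theorem StrictConcaveOn.lt_apply_midpoint_of_apply_eq {s : Set ℝ} {f : ℝ → ℝ}
    (hf : StrictConcaveOn ℝ s f) {x y : ℝ} (hx : x ∈ s) (hy : y ∈ s) (hxy : x ≠ y)
    (hfxy : f x = f y) : f x < f ((x + y) / 2) := by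
  have h := hf.2 hx hy hxy (by norm_num : (0 : ℝ) < 1 / 2) (by norm_num : (0 : ℝ) < 1 / 2)
    (by norm_num)
  simp only [smul_eq_mul, ← hfxy] at h
  rw [show (x + y) / 2 = 1 / 2 * x + 1 / 2 * y by ring]
  linarith

namespace BinaryMIM

variable (ϖ : ℝ)

noncomputable def term (q : ℝ) : ℝ := q * exp (ϖ * (1 - q))

noncomputable def termDeriv (q : ℝ) : ℝ := exp (ϖ * (1 - q)) * (1 - ϖ * q)

noncomputable def termDeriv2 (q : ℝ) : ℝ := exp (ϖ * (1 - q)) * (ϖ * q - 2) * ϖ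

theorem hasDerivAt_exp_mul_one_sub (q : ℝ) :
    HasDerivAt (fun q => exp (ϖ * (1 - q))) (-ϖ * exp (ϖ * (1 - q))) q := by
  have h : HasDerivAt (fun q : ℝ => ϖ * (1 - q)) (-ϖ) q := by
    simpa using ((hasDerivAt_id q).const_sub 1).const_mul ϖ
  simpa [mul_comm] using h.exp

theorem hasDerivAt_term (q : ℝ) : HasDerivAt (term ϖ) (termDeriv ϖ q) q := by
  refine ((hasDerivAt_id q).mul (hasDerivAt_exp_mul_one_sub ϖ q)).congr_deriv ?_
  simp only [termDeriv, id_eq]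
  ring

theorem hasDerivAt_termDeriv (q : ℝ) : HasDerivAt (termDeriv ϖ) (termDeriv2 ϖ q) q := by
  have hlin : HasDerivAt (fun q : ℝ => 1 - ϖ * q) (-ϖ) q := by
    simpa using ((hasDerivAt_id q).const_mul ϖ).const_sub 1
  refine ((hasDerivAt_exp_mul_one_sub ϖ q).mul hlin).congr_deriv ?_
  simp only [termDeriv2]
  ring

theorem termDeriv2_neg {ϖ q : ℝ} (hϖ : 0 < ϖ) (hq : ϖ * q < 2) : termDeriv2 ϖ q < 0 :=
  mul_neg_of_neg_of_pos (mul_neg_of_pos_of_neg (exp_pos _) (by linarith)) hϖ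

end BinaryMIM

open BinaryMIM

noncomputable def binaryMIM (ϖ p : ℝ) : ℝ := p * exp (ϖ * (1 - p)) + (1 - p) * exp (ϖ * p)

section

variable (ϖ : ℝ)

theorem binaryMIM_eq_term_add_term_one_sub (p : ℝ) :
    binaryMIM ϖ p = term ϖ p + term ϖ (1 - p) := by
  simp only [binaryMIM, term, sub_sub_cancel]

theorem binaryMIM_one_sub (p : ℝ) : binaryMIM ϖ (1 - p) = binaryMIM ϖ p := by
  rw [binaryMIM_eq_term_add_term_one_sub, binaryMIM_eq_term_add_term_one_sub, sub_sub_cancel,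
    add_comm]

theorem binaryMIM_half : binaryMIM ϖ (1 / 2) = exp (ϖ / 2) := by
  simp only [binaryMIM, show (1 : ℝ) - 1 / 2 = 1 / 2 by norm_num, mul_one_div]
  ring

theorem hasDerivAt_binaryMIM (p : ℝ) :
    HasDerivAt (binaryMIM ϖ) (termDeriv ϖ p - termDeriv ϖ (1 - p)) p := by
  rw [funext (binaryMIM_eq_term_add_term_one_sub ϖ), sub_eq_add_neg]
  exact (hasDerivAt_term ϖ p).add ((hasDerivAt_term ϖ (1 - p)).comp_const_sub 1 p)

theorem deriv_binaryMIM : deriv (binaryMIM ϖ) = fun p => termDeriv ϖ p - termDeriv ϖ (1 - p) :=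
  funext fun p => (hasDerivAt_binaryMIM ϖ p).deriv

theorem deriv_deriv_binaryMIM (p : ℝ) :
    deriv (deriv (binaryMIM ϖ)) p = termDeriv2 ϖ p + termDeriv2 ϖ (1 - p) := by
  rw [deriv_binaryMIM, ← sub_neg_eq_add]
  exact ((hasDerivAt_termDeriv ϖ p).sub
    ((hasDerivAt_termDeriv ϖ (1 - p)).comp_const_sub 1 p)).deriv

variable {ϖ}

theorem deriv_deriv_binaryMIM_neg (hϖ : 0 < ϖ) (hϖ2 : ϖ < 2) {p : ℝ}
    (hp : p ∈ Icc (0 : ℝ) 1) : deriv (deriv (binaryMIM ϖ)) p < 0 := by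
  rw [deriv_deriv_binaryMIM]
  have h1 : ϖ * p < 2 := by nlinarith [hp.2]
  have h2 : ϖ * (1 - p) < 2 := by nlinarith [hp.1]
  linarith [termDeriv2_neg hϖ h1, termDeriv2_neg hϖ h2]

theorem strictConcaveOn_binaryMIM (hϖ : 0 < ϖ) (hϖ2 : ϖ < 2) :
    StrictConcaveOn ℝ (Icc 0 1) (binaryMIM ϖ) :=
  strictConcaveOn_of_deriv2_neg' (convex_Icc 0 1)
    (fun p _ => (hasDerivAt_binaryMIM ϖ p).continuousAt.continuousWithinAt)
    fun _ hp => deriv_deriv_binaryMIM_neg hϖ hϖ2 hp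

theorem binaryMIM_lt_half (hϖ : 0 < ϖ) (hϖ2 : ϖ < 2) {p : ℝ} (hp : p ∈ Icc (0 : ℝ) 1)
    (hp2 : p ≠ 1 / 2) : binaryMIM ϖ p < binaryMIM ϖ (1 / 2) := by
  have hp' : 1 - p ∈ Icc (0 : ℝ) 1 := ⟨by linarith [hp.2], by linarith [hp.1]⟩
  have h := (strictConcaveOn_binaryMIM hϖ hϖ2).lt_apply_midpoint_of_apply_eq hp hp'
    (fun h => hp2 (by linarith)) (binaryMIM_one_sub ϖ p).symm
  rwa [add_sub_cancel] at h

end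

/-- For `0 < ϖ < 2`, the binary MIM function
`L(ϖ,p) = p·exp(ϖ(1−p)) + (1−p)·exp(ϖp)` is strictly concave on `[0,1]`
(its second derivative `exp(ϖ(1−p))·(ϖp−2)·ϖ + exp(ϖp)·((1−p)ϖ−2)·ϖ` is negative on
`[0,1]`), and it attains its maximum over `[0,1]` uniquely at `p = 1/2`, where its value
is `exp(ϖ/2)`. -/
theorem binary_mim_strictly_concave_max (ϖ : ℝ) (hϖ : 0 < ϖ) (hϖ2 : ϖ < 2) :
    StrictConcaveOn ℝ (Set.Icc (0:ℝ) 1)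
      (fun p : ℝ => p * Real.exp (ϖ * (1 - p)) + (1 - p) * Real.exp (ϖ * p)) ∧
    (∀ p ∈ Set.Icc (0:ℝ) 1,
      deriv (deriv (fun p : ℝ =>
          p * Real.exp (ϖ * (1 - p)) + (1 - p) * Real.exp (ϖ * p))) p
        = Real.exp (ϖ * (1 - p)) * (ϖ * p - 2) * ϖ
            + Real.exp (ϖ * p) * ((1 - p) * ϖ - 2) * ϖ ∧
      Real.exp (ϖ * (1 - p)) * (ϖ * p - 2) * ϖ
          + Real.exp (ϖ * p) * ((1 - p) * ϖ - 2) * ϖ < 0) ∧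
    ((1/2 : ℝ) * Real.exp (ϖ * (1 - 1/2)) + (1 - 1/2) * Real.exp (ϖ * (1/2))
        = Real.exp (ϖ / 2)) ∧
    ∀ p ∈ Set.Icc (0:ℝ) 1, p ≠ 1/2 →
      p * Real.exp (ϖ * (1 - p)) + (1 - p) * Real.exp (ϖ * p) < Real.exp (ϖ / 2) := by
  have hderiv2 (p : ℝ) : deriv (deriv (binaryMIM ϖ)) p
      = exp (ϖ * (1 - p)) * (ϖ * p - 2) * ϖ + exp (ϖ * p) * ((1 - p) * ϖ - 2) * ϖ := by
    rw [deriv_deriv_binaryMIM, termDeriv2, termDeriv2, sub_sub_cancel, mul_comm ϖ (1 - p)]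
  refine ⟨strictConcaveOn_binaryMIM hϖ hϖ2, fun p hp => ⟨hderiv2 p, ?_⟩, binaryMIM_half ϖ,
    fun p hp hp2 => binaryMIM_half ϖ ▸ binaryMIM_lt_half hϖ hϖ2 hp hp2⟩
  exact hderiv2 p ▸ deriv_deriv_binaryMIM_neg hϖ hϖ2 hp
end

section
/- Let X have finite alphabet with distribution p(x), let d(x,y) ≥ 0 be a distortion function with D_max = min over output symbols yⱼ of Σᵢ p(xᵢ)d(xᵢ,yⱼ), and suppose the MIM parameter ϖ satisfies 0 < ϖ ≤ 2·(minⱼ p(yⱼ))/(maxᵢ p(xᵢ)) for the output distributions involved. Then for every allowable distortion D with 0 ≤ D < D_max, the message importance distortion function is achieved on the boundary of the constraint: R_ϖ(D) = min over transfer matrices p(y|x) with average distortion D̄ exactly equal to D of {L(ϖ,X) − L(ϖ,X|Y)}. -/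
open Finset

/-- Message importance measure (MIM) of a distribution with parameter `ϖ`. -/
noncomputable def MIM (ϖ : ℝ) {n : ℕ} (p : Fin n → ℝ) : ℝ :=
  ∑ i, p i * Real.exp (ϖ * (1 - p i))

/-- Conditional message importance measure (CMIM) of the output of channel `W` fed with
input distribution `px`:
`L(ϖ,X|Y) = ∑ⱼ p(yⱼ) ∑ᵢ p(xᵢ|yⱼ)·exp(ϖ(1−p(xᵢ|yⱼ)))` where
`p(yⱼ) = ∑ᵢ p(xᵢ) p(yⱼ|xᵢ)` and `p(xᵢ|yⱼ) = p(xᵢ) p(yⱼ|xᵢ) / p(yⱼ)`. -/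
noncomputable def CMIM (ϖ : ℝ) {m n : ℕ} (px : Fin m → ℝ) (W : Fin m → Fin n → ℝ) : ℝ :=
  ∑ j, (∑ i, px i * W i j) *
    ∑ i, (px i * W i j / ∑ k, px k * W k j) *
      Real.exp (ϖ * (1 - px i * W i j / ∑ k, px k * W k j))

/-- `W` is a transfer matrix (channel): nonnegative entries, rows summing to 1. -/
def IsChannel {m n : ℕ} (W : Fin m → Fin n → ℝ) : Prop :=
  (∀ i j, 0 ≤ W i j) ∧ ∀ i, ∑ j, W i j = 1

/-- Average distortion `D̄ = ∑ᵢⱼ p(xᵢ) p(yⱼ|xᵢ) d(xᵢ,yⱼ)`. -/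
noncomputable def avgDist {m n : ℕ} (px : Fin m → ℝ) (d W : Fin m → Fin n → ℝ) : ℝ :=
  ∑ i, ∑ j, px i * W i j * d i j

/-- Message importance distortion function: the least message importance loss
`L(ϖ,X) − L(ϖ,X|Y)` over transfer matrices with average distortion at most `D`. -/
noncomputable def RD (ϖ : ℝ) {m n : ℕ} (px : Fin m → ℝ) (d : Fin m → Fin n → ℝ)
    (D : ℝ) : ℝ :=
  sInf {r : ℝ | ∃ W : Fin m → Fin n → ℝ,
    IsChannel W ∧ avgDist px d W ≤ D ∧ r = MIM ϖ px - CMIM ϖ px W}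

/-!
The CMIM summand `p(xᵢ,yⱼ) · exp (ϖ (1 - p(xᵢ|yⱼ)))` is the perspective `b · f (a / b)` of
`f x = x · exp (ϖ (1 - x))`, which is concave on `[0, 1]` for `ϖ ≤ 2`. Perspectives of concave
functions are superadditive, so the CMIM is concave in the channel and bounded by the MIM, the
value of any deterministic channel. The deterministic channel onto the output symbol realizing
`D_max` has average distortion `D_max > D`; mixing a channel of distortion `≤ D` with it until the
distortion is exactly `D` does not increase the loss, so both infima are taken over sets that
dominate each other.
-/

lemma concaveOn_mul_exp_mul_one_sub {ϖ c : ℝ} (hϖ : 0 ≤ ϖ) (hc : ϖ * c ≤ 2) :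
    ConcaveOn ℝ (Set.Iic c) (fun x => x * Real.exp (ϖ * (1 - x))) := by
  have hinner (x : ℝ) : HasDerivAt (fun x => ϖ * (1 - x)) (-ϖ) x := by
    simpa using ((hasDerivAt_id x).const_sub 1).const_mul ϖ
  refine concaveOn_of_hasDerivWithinAt2_nonpos (convex_Iic c) (by fun_prop)
    (f' := fun x => Real.exp (ϖ * (1 - x)) * (1 - ϖ * x))
    (f'' := fun x => Real.exp (ϖ * (1 - x)) * (ϖ * (ϖ * x - 2)))
    (fun x _ => ?_) (fun x _ => ?_) (fun x hx => ?_)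
  · exact (((hasDerivAt_id x).mul (hinner x).exp).congr_deriv (by simp; ring)).hasDerivWithinAt
  · exact (((hinner x).exp.mul (((hasDerivAt_id x).const_mul ϖ).const_sub 1)).congr_deriv
      (by simp; ring)).hasDerivWithinAt
  · rw [interior_Iic] at hx
    have : ϖ * x ≤ 2 := (mul_le_mul_of_nonneg_left (le_of_lt hx) hϖ).trans hc
    exact mul_nonpos_of_nonneg_of_nonpos (Real.exp_pos _).le
      (mul_nonpos_of_nonneg_of_nonpos hϖ (by linarith))

lemma ConcaveOn.mul_div_add_mul_div_le {s : Set ℝ} {f : ℝ → ℝ} (hf : ConcaveOn ℝ s f)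
    {a₁ a₂ b₁ b₂ : ℝ} (hb₁ : 0 < b₁) (hb₂ : 0 < b₂) (h₁ : a₁ / b₁ ∈ s) (h₂ : a₂ / b₂ ∈ s) :
    b₁ * f (a₁ / b₁) + b₂ * f (a₂ / b₂) ≤ (b₁ + b₂) * f ((a₁ + a₂) / (b₁ + b₂)) := by
  have hb : 0 < b₁ + b₂ := add_pos hb₁ hb₂
  have hcomb := hf.2 h₁ h₂ (div_nonneg hb₁.le hb.le) (div_nonneg hb₂.le hb.le)
    (by field_simp)
  rw [smul_eq_mul, smul_eq_mul, smul_eq_mul, smul_eq_mul,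
    show b₁ / (b₁ + b₂) * (a₁ / b₁) + b₂ / (b₁ + b₂) * (a₂ / b₂) = (a₁ + a₂) / (b₁ + b₂) by
      field_simp] at hcomb
  calc b₁ * f (a₁ / b₁) + b₂ * f (a₂ / b₂)
      = (b₁ + b₂) * (b₁ / (b₁ + b₂) * f (a₁ / b₁) + b₂ / (b₁ + b₂) * f (a₂ / b₂)) := by
        field_simp
    _ ≤ (b₁ + b₂) * f ((a₁ + a₂) / (b₁ + b₂)) := mul_le_mul_of_nonneg_left hcomb hb.le

/-- The summand of `CMIM` in terms of the joint mass `a = p(xᵢ)p(yⱼ|xᵢ)` and the output mass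
`b = p(yⱼ)`: for `b > 0` it is the perspective `b · f (a / b)` of `f x = x · exp (ϖ (1 - x))`. -/
noncomputable def importanceTerm (ϖ a b : ℝ) : ℝ := a * Real.exp (ϖ * (1 - a / b))

@[simp]
lemma importanceTerm_zero_left (ϖ b : ℝ) : importanceTerm ϖ 0 b = 0 := by
  simp [importanceTerm]

lemma importanceTerm_mul_mul (ϖ c a b : ℝ) :
    importanceTerm ϖ (c * a) (c * b) = c * importanceTerm ϖ a b := by
  rcases eq_or_ne c 0 with rfl | hc
  · simp [importanceTerm]
  · rw [importanceTerm, importanceTerm, mul_div_mul_left _ _ hc, mul_assoc]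

lemma importanceTerm_add_le {ϖ : ℝ} (hϖ : 0 ≤ ϖ) (hϖ2 : ϖ ≤ 2) {a₁ a₂ b₁ b₂ : ℝ}
    (ha₁ : 0 ≤ a₁) (h₁ : a₁ ≤ b₁) (ha₂ : 0 ≤ a₂) (h₂ : a₂ ≤ b₂) :
    importanceTerm ϖ a₁ b₁ + importanceTerm ϖ a₂ b₂ ≤ importanceTerm ϖ (a₁ + a₂) (b₁ + b₂) := by
  rcases (ha₁.trans h₁).eq_or_lt with rfl | hb₁
  · obtain rfl := le_antisymm h₁ ha₁
    simp
  rcases (ha₂.trans h₂).eq_or_lt with rfl | hb₂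
  · obtain rfl := le_antisymm h₂ ha₂
    simp
  have hf := (concaveOn_mul_exp_mul_one_sub hϖ (by linarith : ϖ * 1 ≤ 2)).subset
    Set.Icc_subset_Iic_self (convex_Icc 0 1)
  have key := hf.mul_div_add_mul_div_le hb₁ hb₂
    ⟨div_nonneg ha₁ hb₁.le, (div_le_one hb₁).2 h₁⟩ ⟨div_nonneg ha₂ hb₂.le, (div_le_one hb₂).2 h₂⟩
  have hb := add_pos hb₁ hb₂
  simp only [importanceTerm]
  convert key using 1 <;> field_simp

lemma importanceTerm_sum_le {ϖ : ℝ} (hϖ : 0 ≤ ϖ) (hϖ2 : ϖ ≤ 2) {ι : Type*} (s : Finset ι)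
    {a b : ι → ℝ} (ha : ∀ j ∈ s, 0 ≤ a j) (hab : ∀ j ∈ s, a j ≤ b j) :
    ∑ j ∈ s, importanceTerm ϖ (a j) (b j) ≤ importanceTerm ϖ (∑ j ∈ s, a j) (∑ j ∈ s, b j) := by
  classical
  induction s using Finset.induction_on with
  | empty => simp
  | insert x s hx ih =>
    simp only [sum_insert hx]
    have ha' : ∀ j ∈ s, 0 ≤ a j := fun j hj => ha j (mem_insert_of_mem hj)
    have hab' : ∀ j ∈ s, a j ≤ b j := fun j hj => hab j (mem_insert_of_mem hj)
    calc importanceTerm ϖ (a x) (b x) + ∑ j ∈ s, importanceTerm ϖ (a j) (b j)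
        ≤ importanceTerm ϖ (a x) (b x) + importanceTerm ϖ (∑ j ∈ s, a j) (∑ j ∈ s, b j) := by
          gcongr
          exact ih ha' hab'
      _ ≤ importanceTerm ϖ (a x + ∑ j ∈ s, a j) (b x + ∑ j ∈ s, b j) :=
          importanceTerm_add_le hϖ hϖ2 (ha x (mem_insert_self x s)) (hab x (mem_insert_self x s))
            (sum_nonneg ha') (sum_le_sum hab')

section Channel

variable {m n : ℕ}

lemma CMIM_eq_sum_importanceTerm (ϖ : ℝ) {px : Fin m → ℝ} (hpx : ∀ i, 0 ≤ px i)
    {W : Fin m → Fin n → ℝ} (hW : ∀ i j, 0 ≤ W i j) :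
    CMIM ϖ px W = ∑ j, ∑ i, importanceTerm ϖ (px i * W i j) (∑ k, px k * W k j) := by
  refine sum_congr rfl fun j _ => ?_
  by_cases hy : ∑ k, px k * W k j = 0
  · have hxy : ∀ i, px i * W i j = 0 := fun i =>
      (sum_eq_zero_iff_of_nonneg fun k _ => mul_nonneg (hpx k) (hW k j)).1 hy i (mem_univ i)
    simp [hxy]
  · rw [mul_sum]
    refine sum_congr rfl fun i _ => ?_
    rw [importanceTerm, ← mul_assoc, mul_div_cancel₀ _ hy]

lemma MIM_eq_sum_importanceTerm (ϖ : ℝ) (px : Fin m → ℝ) :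
    MIM ϖ px = ∑ i, importanceTerm ϖ (px i) 1 := by
  simp [MIM, importanceTerm]

lemma mul_le_sum_mul {px : Fin m → ℝ} (hpx : ∀ i, 0 ≤ px i) {W : Fin m → Fin n → ℝ}
    (hW : ∀ i j, 0 ≤ W i j) (i : Fin m) (j : Fin n) : px i * W i j ≤ ∑ k, px k * W k j :=
  single_le_sum (f := fun k => px k * W k j) (fun k _ => mul_nonneg (hpx k) (hW k j)) (mem_univ i)

lemma IsChannel.sum_mul_sum_eq {W : Fin m → Fin n → ℝ} (hW : IsChannel W) (px : Fin m → ℝ) :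
    ∑ j, ∑ i, px i * W i j = ∑ i, px i := by
  rw [sum_comm]
  exact sum_congr rfl fun i _ => by rw [← mul_sum, hW.2 i, mul_one]

lemma CMIM_le_MIM {ϖ : ℝ} (hϖ : 0 ≤ ϖ) (hϖ2 : ϖ ≤ 2) {px : Fin m → ℝ} (hpx : ∀ i, 0 ≤ px i)
    (hsum : ∑ i, px i = 1) {W : Fin m → Fin n → ℝ} (hW : IsChannel W) :
    CMIM ϖ px W ≤ MIM ϖ px := by
  rw [CMIM_eq_sum_importanceTerm ϖ hpx hW.1, MIM_eq_sum_importanceTerm, sum_comm]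
  refine sum_le_sum fun i _ => ?_
  calc ∑ j, importanceTerm ϖ (px i * W i j) (∑ k, px k * W k j)
      ≤ importanceTerm ϖ (∑ j, px i * W i j) (∑ j, ∑ k, px k * W k j) :=
        importanceTerm_sum_le hϖ hϖ2 _ (fun j _ => mul_nonneg (hpx i) (hW.1 i j))
          fun j _ => mul_le_sum_mul hpx hW.1 i j
    _ = importanceTerm ϖ (px i) 1 := by
        rw [← mul_sum, hW.2 i, mul_one, hW.sum_mul_sum_eq, hsum]

lemma convex_setOf_isChannel : Convex ℝ {W : Fin m → Fin n → ℝ | IsChannel W} := by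
  intro W hW Q hQ a b ha hb hab
  refine ⟨fun i j => ?_, fun i => ?_⟩
  · simpa using add_nonneg (mul_nonneg ha (hW.1 i j)) (mul_nonneg hb (hQ.1 i j))
  · simp [sum_add_distrib, ← mul_sum, hW.2 i, hQ.2 i, hab]

lemma concaveOn_CMIM {ϖ : ℝ} (hϖ : 0 ≤ ϖ) (hϖ2 : ϖ ≤ 2) {px : Fin m → ℝ}
    (hpx : ∀ i, 0 ≤ px i) :
    ConcaveOn ℝ {W : Fin m → Fin n → ℝ | IsChannel W} (CMIM ϖ px) := by
  refine ⟨convex_setOf_isChannel, fun W hW Q hQ a b ha hb hab => ?_⟩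
  have hmix := convex_setOf_isChannel hW hQ ha hb hab
  rw [smul_eq_mul, smul_eq_mul, CMIM_eq_sum_importanceTerm ϖ hpx hW.1,
    CMIM_eq_sum_importanceTerm ϖ hpx hQ.1, CMIM_eq_sum_importanceTerm ϖ hpx hmix.1,
    mul_sum, mul_sum, ← sum_add_distrib]
  refine sum_le_sum fun j _ => ?_
  rw [mul_sum, mul_sum, ← sum_add_distrib]
  refine sum_le_sum fun i _ => ?_
  simp only [Pi.add_apply, Pi.smul_apply, smul_eq_mul, mul_add, sum_add_distrib,
    mul_left_comm (px _), ← mul_sum]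
  rw [← importanceTerm_mul_mul, ← importanceTerm_mul_mul]
  exact importanceTerm_add_le hϖ hϖ2 (mul_nonneg ha (mul_nonneg (hpx i) (hW.1 i j)))
    (mul_le_mul_of_nonneg_left (mul_le_sum_mul hpx hW.1 i j) ha)
    (mul_nonneg hb (mul_nonneg (hpx i) (hQ.1 i j)))
    (mul_le_mul_of_nonneg_left (mul_le_sum_mul hpx hQ.1 i j) hb)

lemma avgDist_add_smul (px : Fin m → ℝ) (d W Q : Fin m → Fin n → ℝ) (a b : ℝ) :
    avgDist px d (a • W + b • Q) = a * avgDist px d W + b * avgDist px d Q := by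
  simp only [avgDist, mul_sum, ← sum_add_distrib, Pi.add_apply, Pi.smul_apply, smul_eq_mul]
  exact sum_congr rfl fun i _ => sum_congr rfl fun j _ => by ring

lemma isChannel_pi_single (j₀ : Fin n) :
    IsChannel (fun (_ : Fin m) => (Pi.single j₀ 1 : Fin n → ℝ)) := by
  refine ⟨fun i j => ?_, fun i => by simp⟩
  by_cases h : j = j₀ <;> simp [h]

lemma avgDist_pi_single (px : Fin m → ℝ) (d : Fin m → Fin n → ℝ) (j₀ : Fin n) :
    avgDist px d (fun _ => Pi.single j₀ 1) = ∑ i, px i * d i j₀ := by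
  simp [avgDist, Pi.single_apply]

lemma CMIM_pi_single (ϖ : ℝ) {px : Fin m → ℝ} (hsum : ∑ i, px i = 1) (j₀ : Fin n) :
    CMIM ϖ px (fun _ => Pi.single j₀ 1) = MIM ϖ px := by
  simp [CMIM, MIM, Pi.single_apply, hsum]

end Channel

/-- The witness is the mixture of `W` and `Q` with average distortion exactly `D`; by concavity
its CMIM is at least the weighted mean of `CMIM W` and `CMIM Q = MIM ≥ CMIM W`. -/
lemma exists_isChannel_avgDist_eq_and_CMIM_le {m n : ℕ} {ϖ : ℝ} (hϖ : 0 ≤ ϖ) (hϖ2 : ϖ ≤ 2)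
    {px : Fin m → ℝ} (hpx : ∀ i, 0 ≤ px i) (hsum : ∑ i, px i = 1) {d W Q : Fin m → Fin n → ℝ}
    (hW : IsChannel W) (hQ : IsChannel Q) (hQmax : CMIM ϖ px Q = MIM ϖ px) {D : ℝ}
    (hWD : avgDist px d W ≤ D) (hDQ : D < avgDist px d Q) :
    ∃ W', IsChannel W' ∧ avgDist px d W' = D ∧ CMIM ϖ px W ≤ CMIM ϖ px W' := by
  set l := (D - avgDist px d W) / (avgDist px d Q - avgDist px d W)
  have hgap : 0 < avgDist px d Q - avgDist px d W := by linarith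
  have hl_nonneg : 0 ≤ l := div_nonneg (by linarith) hgap.le
  have hl_sum : 1 - l + l = 1 := by ring
  have hl_compl : 0 ≤ 1 - l := by
    rw [sub_nonneg, div_le_one hgap]
    linarith
  refine ⟨(1 - l) • W + l • Q, convex_setOf_isChannel hW hQ hl_compl hl_nonneg hl_sum, ?_, ?_⟩
  · rw [avgDist_add_smul]
    linear_combination div_mul_cancel₀ (D - avgDist px d W) hgap.ne'
  · have hmix := (concaveOn_CMIM hϖ hϖ2 hpx).2 hW hQ hl_compl hl_nonneg hl_sum
    have hWQ := CMIM_le_MIM hϖ hϖ2 hpx hsum hW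
    rw [smul_eq_mul, smul_eq_mul, hQmax] at hmix
    nlinarith

theorem rd_boundary_expression_general (m n : ℕ) (ϖ : ℝ) (hϖ : 0 < ϖ) (hϖ2 : ϖ ≤ 2)
    (px : Fin (m+1) → ℝ) (hpx : ∀ i, 0 ≤ px i) (hsum : ∑ i, px i = 1)
    (d : Fin (m+1) → Fin (n+1) → ℝ)
    (D : ℝ)
    (hDmax : D < Finset.univ.inf' Finset.univ_nonempty
      (fun j => ∑ i, px i * d i j)) :
    RD ϖ px d D = sInf {r : ℝ | ∃ W : Fin (m+1) → Fin (n+1) → ℝ,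
      IsChannel W ∧ avgDist px d W = D ∧ r = MIM ϖ px - CMIM ϖ px W} := by
  obtain ⟨j₀, -, hj₀⟩ := exists_mem_eq_inf' univ_nonempty fun j => ∑ i, px i * d i j
  refine csInf_eq_csInf_of_forall_exists_le ?_
    fun _ ⟨W, hW, hWD, hr⟩ => ⟨_, ⟨W, hW, hWD.le, hr⟩, le_rfl⟩
  rintro _ ⟨W, hW, hWD, rfl⟩
  obtain ⟨W', hW', hW'D, hle⟩ := exists_isChannel_avgDist_eq_and_CMIM_le hϖ.le hϖ2 hpx hsum hW
    (isChannel_pi_single j₀) (CMIM_pi_single ϖ hsum j₀) hWD (by rwa [avgDist_pi_single, ← hj₀])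
  exact ⟨_, ⟨W', hW', hW'D, rfl⟩, by linarith⟩

/-- Equivalent expression for the message importance distortion function.
With `D_max = minⱼ ∑ᵢ p(xᵢ)d(xᵢ,yⱼ)` and the MIM parameter in the concavity regime
(`0 < ϖ ≤ 2`, so that `ϖ ≤ 2/p(x|y)` for the conditional output distributions involved),
for every allowable distortion `0 ≤ D < D_max` the infimum defining `R_ϖ(D)` is achieved
on the boundary of the constraint: it equals the least message importance loss over
transfer matrices whose average distortion is exactly `D`. -/
theorem rd_boundary_expression (m n : ℕ) (ϖ : ℝ) (hϖ : 0 < ϖ) (hϖ2 : ϖ ≤ 2)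
    (px : Fin (m+1) → ℝ) (hpx : ∀ i, 0 ≤ px i) (hsum : ∑ i, px i = 1)
    (d : Fin (m+1) → Fin (n+1) → ℝ) (hd : ∀ i j, 0 ≤ d i j)
    (D : ℝ) (hD0 : 0 ≤ D)
    (hDmax : D < Finset.univ.inf' Finset.univ_nonempty
      (fun j => ∑ i, px i * d i j)) :
    RD ϖ px d D = sInf {r : ℝ | ∃ W : Fin (m+1) → Fin (n+1) → ℝ,
      IsChannel W ∧ avgDist px d W = D ∧ r = MIM ϖ px - CMIM ϖ px W} :=
  rd_boundary_expression_general m n ϖ hϖ hϖ2 px hpx hsum d D hDmax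
end
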